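/- For all integers n ≥ 1 and 1 ≤ k ≤ n, and every v ∈ ℝ^n, if h is uniformly distributed on {−1,1}^n, then E[⟨h,v⟩^{2k}] ≥ (k/(4n))^k · ‖v‖₁^{2k}. -/

import Mathlib

/-!
The function `v ↦ E⟨h, v⟩^{2k}` is convex and invariant under permuting and flipping the signs
of coordinates, so for fixed `‖v‖₁ = σ` it is smallest at the flat vector `(σ/n, …, σ/n)`
(average `|v|` over its cyclic shifts and apply Jensen). For the flat vector, splitting off
one sign gives `M(n+1, k+1) ≥ 2 M(n, k+1) + (2k+2)(2k+1) M(n, k)` for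
`M(n, k) = ∑_h (∑ h_i)^{2k}`, whence `E(∑ h_i)^{2k} ≥ (2k)!/2^k · C(n, k)`: pair up the `2k`
factors along `k` distinct coordinates. It remains to use `C(n, k) ≥ (n/k)^k` and
`(2k)! ≥ (k²/2)^k`, the latter from `m^m/m! ≤ e^m` and `e² ≤ 8`.
-/

open Finset Nat

theorem ConvexOn.finset_sum {E κ : Type*} [AddCommMonoid E] [Module ℝ E] {s : Set E}
    (hs : Convex ℝ s) (t : Finset κ) {f : κ → E → ℝ} (hf : ∀ j ∈ t, ConvexOn ℝ s (f j)) :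
    ConvexOn ℝ s fun x => ∑ j ∈ t, f j x := by
  classical
  induction t using Finset.induction_on with
  | empty => simpa using convexOn_const 0 hs
  | insert j t hj ih =>
    simp only [sum_insert hj]
    exact (hf j (mem_insert_self j t)).add (ih fun i hi => hf i (mem_insert_of_mem hi))

theorem ConvexOn.map_const_average_le {n : ℕ} {F : (Fin n → ℝ) → ℝ}
    (hF : ConvexOn ℝ Set.univ F) (hinv : ∀ w (π : Equiv.Perm (Fin n)), F (w ∘ π) = F w)
    (w : Fin n → ℝ) : F (fun _ => (∑ i, w i) / n) ≤ F w := by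
  cases n with
  | zero => exact (congrArg F (Subsingleton.elim _ _)).le
  | succ m =>
    have hmean : (fun _ => (∑ i, w i) / ↑(m + 1)) =
        ∑ c : Fin (m + 1), (1 / (m + 1 : ℝ)) • (w ∘ Equiv.addRight c) := by
      funext i
      simp only [Finset.sum_apply, Pi.smul_apply, Function.comp_apply, Equiv.coe_addRight,
        smul_eq_mul, ← mul_sum]
      rw [show ∑ c, w (i + c) = ∑ c, w c from Equiv.sum_comp (Equiv.addLeft i) w]
      push_cast
      ring
    calc F _ = F (∑ c : Fin (m + 1), (1 / (m + 1 : ℝ)) • (w ∘ Equiv.addRight c)) := by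
          rw [hmean]
      _ ≤ ∑ c : Fin (m + 1), (1 / (m + 1 : ℝ)) • F (w ∘ Equiv.addRight c) :=
        hF.map_sum_le (fun _ _ => by positivity) (by simp; field_simp) fun _ _ => trivial
      _ = F w := by
        simp only [hinv, sum_const, Finset.card_univ, Fintype.card_fin, nsmul_eq_mul, smul_eq_mul,
          Nat.cast_add_one]
        field_simp

theorem Nat.pow_le_pow_mul_choose {n k : ℕ} (hkn : k ≤ n) : n ^ k ≤ k ^ k * n.choose k := by
  have hdesc : n ^ k * k ! ≤ k ^ k * n.descFactorial k := by
    rw [← k.descFactorial_self, descFactorial_eq_prod_range, descFactorial_eq_prod_range,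
      ← card_range k, ← prod_const, ← prod_const, card_range, ← prod_mul_distrib,
      ← prod_mul_distrib]
    refine prod_le_prod' fun i hi => ?_
    have hik : i < k := mem_range.mp hi
    zify [hik.le, hik.le.trans hkn]
    nlinarith
  rw [descFactorial_eq_factorial_mul_choose, mul_left_comm, mul_comm (n ^ k)] at hdesc
  exact Nat.le_of_mul_le_mul_left hdesc k.factorial_pos

theorem Nat.pow_two_mul_le_two_pow_mul_factorial (k : ℕ) : k ^ (2 * k) ≤ 2 ^ k * (2 * k)! := by
  suffices (k : ℝ) ^ (2 * k) ≤ 2 ^ k * (2 * k)! by exact_mod_cast this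
  have hseries := Real.pow_div_factorial_le_exp (2 * k) (by positivity) (2 * k)
  have hexp : Real.exp (2 * k) ≤ 8 ^ k := by
    have : Real.exp 1 ^ 2 ≤ 8 := by nlinarith [Real.exp_one_lt_d9, Real.exp_pos 1]
    calc Real.exp (2 * k) = (Real.exp 1 ^ 2) ^ k := by
          rw [← pow_mul, ← Real.exp_nat_mul]; push_cast; ring_nf
      _ ≤ 8 ^ k := pow_le_pow_left₀ (by positivity) this k
  rw [div_le_iff₀ (by positivity), mul_pow, pow_mul] at hseries
  refine le_of_mul_le_mul_left ?_ (by positivity : (0 : ℝ) < 4 ^ k)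
  calc (4 : ℝ) ^ k * k ^ (2 * k) ≤ Real.exp (2 * k) * (2 * k)! := by
        norm_num at hseries ⊢; exact hseries
    _ ≤ 8 ^ k * (2 * k)! := by gcongr
    _ = 4 ^ k * (2 ^ k * (2 * k)!) := by rw [← mul_assoc, ← mul_pow]; norm_num

theorem Nat.mul_pow_le_two_pow_mul_factorial_mul_choose {n k : ℕ} (hkn : k ≤ n) :
    (k * n) ^ k ≤ 2 ^ k * (2 * k)! * n.choose k :=
  calc (k * n) ^ k ≤ k ^ k * (k ^ k * n.choose k) := by
        rw [mul_pow]; gcongr; exact Nat.pow_le_pow_mul_choose hkn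
    _ = k ^ (2 * k) * n.choose k := by ring
    _ ≤ 2 ^ k * (2 * k)! * n.choose k := by
        gcongr; exact Nat.pow_two_mul_le_two_pow_mul_factorial k

theorem two_mul_pow_add_le_add_one_pow_add_sub_one_pow (x : ℝ) (k : ℕ) :
    2 * x ^ (2 * k + 2) + (2 * k + 2) * (2 * k + 1) * x ^ (2 * k) ≤
      (x + 1) ^ (2 * k + 2) + (x - 1) ^ (2 * k + 2) := by
  set m := 2 * k + 2 with hm
  have hmeven : Even m := ⟨k + 1, by omega⟩
  set term : ℕ → ℝ := fun i => x ^ i * (1 + (-1) ^ (m - i)) * m.choose i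
  have hexpand : (x + 1) ^ m + (x - 1) ^ m = ∑ i ∈ range (m + 1), term i := by
    rw [sub_eq_add_neg, add_pow, add_pow, ← sum_add_distrib]
    exact sum_congr rfl fun i _ => by simp only [term, one_pow]; ring
  -- odd powers of `x` cancel, even ones appear twice
  have hterm : ∀ i ∈ range (m + 1), 0 ≤ term i := by
    intro i hi
    have him : i ≤ m := Nat.lt_succ_iff.mp (mem_range.mp hi)
    rcases Nat.even_or_odd i with heven | hodd
    · have : Even (m - i) := (Nat.even_sub him).mpr (by simp [hmeven, heven])
      simp only [term, this.neg_one_pow]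
      have := heven.pow_nonneg x
      positivity
    · have : Odd (m - i) := (Nat.odd_sub him).mpr <|
        iff_of_false (Nat.not_odd_iff_even.mpr hmeven) (Nat.not_even_iff_odd.mpr hodd)
      simp [term, this.neg_one_pow]
  have htop : term m = 2 * x ^ m := by simp [term]; ring
  have hnext : term (2 * k) = (2 * k + 2) * (2 * k + 1) * x ^ (2 * k) := by
    have : m.choose (2 * k) = m.choose 2 := by rw [hm, Nat.choose_symm_add]
    simp only [term, this, Nat.cast_choose_two, show m - 2 * k = 2 by omega]
    push_cast [hm]
    ring
  rw [hexpand, ← htop, ← hnext]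
  exact add_le_sum hterm (by simp) (by simp; omega) (by omega)

noncomputable def boolSign (b : Bool) : ℝ := if b then 1 else -1

theorem boolSign_not (b : Bool) : boolSign (!b) = -boolSign b := by
  cases b <;> simp [boolSign]

section

variable {ι : Type*} [Fintype ι] [DecidableEq ι]

-- `2 ^ card ι` times the `p`-th moment of the Rademacher sum `⟨h, w⟩`
noncomputable def signMoment (p : ℕ) (w : ι → ℝ) : ℝ :=
  ∑ h : ι → Bool, (∑ i, boolSign (h i) * w i) ^ p

theorem signMoment_comp_perm (p : ℕ) (w : ι → ℝ) (π : Equiv.Perm ι) :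
    signMoment p (w ∘ π) = signMoment p w := by
  refine Fintype.sum_equiv (π.arrowCongr (.refl Bool)) _ _ fun h => ?_
  conv_rhs => rw [← Equiv.sum_comp π]
  simp [Equiv.arrowCongr_apply]

theorem signMoment_abs (p : ℕ) (w : ι → ℝ) :
    signMoment p (fun i => |w i|) = signMoment p w := by
  have hflip : Function.Involutive fun (h : ι → Bool) i => xor (h i) (decide (w i < 0)) := by
    intro h; funext i; simp
  refine (Fintype.sum_bijective _ hflip.bijective _ _ fun h => ?_).symm
  congr 1
  refine sum_congr rfl fun i _ => ?_
  rcases lt_or_ge (w i) 0 with hw | hw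
  · simp [hw, abs_of_neg, boolSign_not]
  · simp [hw.not_gt, abs_of_nonneg hw]

theorem signMoment_const (p : ℕ) (c : ℝ) :
    signMoment p (fun _ : ι => c) = c ^ p * signMoment p (fun _ : ι => 1) := by
  simp only [signMoment, mul_sum, ← mul_pow, ← sum_mul, mul_one, mul_comm c]

theorem signMoment_nonneg {p : ℕ} (hp : Even p) (w : ι → ℝ) : 0 ≤ signMoment p w :=
  sum_nonneg fun _ _ => hp.pow_nonneg _

theorem signMoment_zero (w : ι → ℝ) : signMoment 0 w = 2 ^ Fintype.card ι := by
  simp [signMoment]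

theorem convexOn_signMoment {p : ℕ} (hp : Even p) :
    ConvexOn ℝ Set.univ (signMoment (ι := ι) p) := by
  have hterm (h : ι → Bool) :
      ConvexOn ℝ Set.univ fun w : ι → ℝ => (∑ i, boolSign (h i) * w i) ^ p := by
    simpa [Function.comp_def] using hp.convexOn_pow.comp_linearMap
      (∑ i, boolSign (h i) • (LinearMap.proj i : (ι → ℝ) →ₗ[ℝ] ℝ))
  exact ConvexOn.finset_sum convex_univ univ fun h _ => hterm h

end

theorem signMoment_one_succ (p n : ℕ) :
    signMoment p (fun _ : Fin (n + 1) => (1 : ℝ)) =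
      ∑ h : Fin n → Bool, ((∑ i, boolSign (h i) + 1) ^ p + (∑ i, boolSign (h i) - 1) ^ p) := by
  rw [signMoment, ← (Fin.consEquiv fun _ => Bool).sum_comp, Fintype.sum_prod_type, sum_comm]
  refine sum_congr rfl fun h _ => ?_
  simp [Fin.sum_univ_succ, boolSign, Fin.consEquiv, add_comm, sub_eq_add_neg]

theorem le_signMoment_one_succ (n k : ℕ) :
    2 * signMoment (2 * k + 2) (fun _ : Fin n => (1 : ℝ)) +
        (2 * k + 2) * (2 * k + 1) * signMoment (2 * k) (fun _ : Fin n => (1 : ℝ)) ≤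
      signMoment (2 * k + 2) (fun _ : Fin (n + 1) => (1 : ℝ)) := by
  rw [signMoment_one_succ]
  simp only [signMoment, mul_one, mul_sum, ← sum_add_distrib]
  exact sum_le_sum fun h _ => two_mul_pow_add_le_add_one_pow_add_sub_one_pow _ k

theorem two_pow_mul_factorial_mul_choose_le_signMoment (n k : ℕ) :
    2 ^ n * ((2 * k)! * n.choose k : ℝ) ≤
      2 ^ k * signMoment (2 * k) (fun _ : Fin n => (1 : ℝ)) := by
  induction n generalizing k with
  | zero =>
    cases k with
    | zero => simp [signMoment]
    | succ k =>
      simpa using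
        mul_nonneg (pow_nonneg zero_le_two (k + 1)) (signMoment_nonneg (even_two_mul _) _)
  | succ n ih =>
    cases k with
    | zero => simp [signMoment_zero]
    | succ k =>
      rw [show 2 * (k + 1) = 2 * k + 2 by ring]
      calc (2 : ℝ) ^ (n + 1) * ((2 * k + 2)! * (n + 1).choose (k + 1))
          = 2 * (2 ^ n * ((2 * k + 2)! * n.choose (k + 1))) +
              2 * (2 * k + 2) * (2 * k + 1) * (2 ^ n * ((2 * k)! * n.choose k)) := by
            rw [choose_succ_succ', factorial_succ, factorial_succ]; push_cast; ring
        _ ≤ 2 * (2 ^ (k + 1) * signMoment (2 * k + 2) (fun _ : Fin n => (1 : ℝ))) +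
              2 * (2 * k + 2) * (2 * k + 1) *
                (2 ^ k * signMoment (2 * k) (fun _ : Fin n => (1 : ℝ))) := by
            gcongr 2 * ?_ + _ * ?_
            · exact ih (k + 1)
            · exact ih k
        _ = 2 ^ (k + 1) * (2 * signMoment (2 * k + 2) (fun _ : Fin n => (1 : ℝ)) +
              (2 * k + 2) * (2 * k + 1) * signMoment (2 * k) (fun _ : Fin n => (1 : ℝ))) := by
            ring
        _ ≤ 2 ^ (k + 1) * signMoment (2 * k + 2) (fun _ : Fin (n + 1) => (1 : ℝ)) := by
            gcongr
            exact le_signMoment_one_succ n k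

theorem two_pow_mul_pow_le_signMoment {n k : ℕ} (hkn : k ≤ n) :
    2 ^ n * (k * n / 4 : ℝ) ^ k ≤ signMoment (2 * k) (fun _ : Fin n => (1 : ℝ)) := by
  have hcomb : ((k * n : ℕ) : ℝ) ^ k ≤ 2 ^ k * (2 * k)! * n.choose k := by
    exact_mod_cast Nat.mul_pow_le_two_pow_mul_factorial_mul_choose hkn
  refine le_of_mul_le_mul_left ?_ (by positivity : (0 : ℝ) < 4 ^ k)
  calc (4 : ℝ) ^ k * (2 ^ n * (k * n / 4) ^ k) = 2 ^ n * ((k * n : ℕ) : ℝ) ^ k := by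
        rw [div_pow]; push_cast; field_simp
    _ ≤ 2 ^ n * (2 ^ k * (2 * k)! * n.choose k) := by gcongr
    _ = 2 ^ k * (2 ^ n * ((2 * k)! * n.choose k)) := by ring
    _ ≤ 2 ^ k * (2 ^ k * signMoment (2 * k) (fun _ : Fin n => (1 : ℝ))) := by
        gcongr 2 ^ k * ?_
        exact two_pow_mul_factorial_mul_choose_le_signMoment n k
    _ = 4 ^ k * signMoment (2 * k) (fun _ : Fin n => (1 : ℝ)) := by
        rw [← mul_assoc, ← mul_pow]; norm_num

theorem stmt_7_general (n k : ℕ) (hkn : k ≤ n) (v : Fin n → ℝ) :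
    ((k : ℝ) / (4 * n)) ^ k * (∑ i, |v i|) ^ (2 * k) ≤
      (∑ h : Fin n → Bool, (∑ i, (if h i then (1 : ℝ) else -1) * v i) ^ (2 * k)) / 2 ^ n := by
  set σ := ∑ i, |v i|
  have hscale :
      ((k : ℝ) / (4 * n)) ^ k * σ ^ (2 * k) = (σ / n) ^ (2 * k) * (k * n / 4) ^ k := by
    rw [pow_mul, pow_mul, ← mul_pow, ← mul_pow]
    rcases Nat.eq_zero_or_pos n with rfl | hn
    · simp
    · have : (n : ℝ) ≠ 0 := Nat.cast_ne_zero.mpr hn.ne'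
      congr 1
      field_simp
  calc ((k : ℝ) / (4 * n)) ^ k * σ ^ (2 * k)
        = (σ / n) ^ (2 * k) * (2 ^ n * (k * n / 4) ^ k) / 2 ^ n := by
        rw [hscale]; field_simp
    _ ≤ (σ / n) ^ (2 * k) * signMoment (2 * k) (fun _ : Fin n => (1 : ℝ)) / 2 ^ n := by
        gcongr
        exact two_pow_mul_pow_le_signMoment hkn
    _ = signMoment (2 * k) (fun _ : Fin n => σ / n) / 2 ^ n := by
        rw [signMoment_const _ (σ / n)]
    _ ≤ signMoment (2 * k) (fun i => |v i|) / 2 ^ n := by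
        gcongr
        exact (convexOn_signMoment (even_two_mul k)).map_const_average_le (signMoment_comp_perm _) _
    _ = _ := by rw [signMoment_abs]; rfl

/-- **Rademacher moment lower bound in every direction** (real-valued content of
Lemma `h-v-moment`): for `1 ≤ k ≤ n` and every `v ∈ ℝ^n`, a uniformly random sign
vector `h ∈ {±1}^n` satisfies `E[⟨h,v⟩^{2k}] ≥ (k/(4n))^k · ‖v‖₁^{2k}`. -/
theorem stmt_7 (n k : ℕ) (hn : 1 ≤ n) (hk : 1 ≤ k) (hkn : k ≤ n) (v : Fin n → ℝ) :
    ((k : ℝ) / (4 * n)) ^ k * (∑ i, |v i|) ^ (2 * k) ≤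
      (∑ h : Fin n → Bool, (∑ i, (if h i then (1 : ℝ) else -1) * v i) ^ (2 * k)) / 2 ^ n :=
  stmt_7_general n k hkn v
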